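/- arXiv:2303.00201 — 2 statements merged into one kernel-verified Lean document; each statement's English description precedes it below -/
import Mathlib

section
/- Quantitative implicit function theorem: Let Y ⊆ ℝ^{n₁}, X ⊆ ℝ^{n₂} be open, f : Y × X → ℝ^{n₁} be C², (y₀,x₀) ∈ Y × X with D_y f(y₀,x₀) invertible. Set L_x = ‖D_x f(y₀,x₀)‖, M_y = ‖(D_y f(y₀,x₀))⁻¹‖, and for R₁, R₂ > 0 set K_yy = sup over y ∈ B(y₀,R₁) of ‖D²_y f(y,x₀)‖, K_xx = sup over (y,x) ∈ B((y₀,x₀),R₂) of ‖D²_x f(y,x)‖, K_xy = sup over (y,x) ∈ B((y₀,x₀),R₂) of ‖D_x D_y f(y,x)‖, and P = min{1/(2 M_y K_yy), R₁}. Then for all r ≤ min{P, R₂} and all ε ≤ min{√(R₂² - r²), 1/(4 M_y K_xy)} satisfying M_y (L_x + K_xy r + K_xx ε) ε < r/2, for every x ∈ B(x₀,ε) there exists a unique g(x) in the closed ball clB(y₀,r) with f(g(x), x) = f(y₀,x₀). -/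
/-!
For fixed `x`, the map `y ↦ f (y, x)` is approximated on `closedBall y₀ r` by
`T = D_y f (y₀, x₀)` up to the Lipschitz error `κ = K_yy r + K_xy ‖x - x₀‖`: by the mean value
inequality applied to `D_y f` in each variable, `‖D_y f (y, x) - T‖ ≤ κ`, and the choice of
`r, ε` makes `M_y κ ≤ 3/4 < 1`. Such a map is injective on the ball and its image contains the
ball of radius `(M_y⁻¹ - κ) r` around `f (y₀, x)` (Newton's iteration with the frozen
derivative `T` is a contraction). The smallness condition on `ε` puts `f (y₀, x₀)` inside that
ball, since `‖f (y₀, x) - f (y₀, x₀)‖ ≤ (L_x + K_xx ‖x - x₀‖) ‖x - x₀‖` by the mean value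
inequality once more.
-/

open Metric Set

open scoped NNReal

theorem ApproximatesLinearOn.existsUnique_mem_closedBall_eq {𝕜 E G : Type*}
    [NontriviallyNormedField 𝕜] [NormedAddCommGroup E] [NormedSpace 𝕜 E] [CompleteSpace E]
    [NormedAddCommGroup G] [NormedSpace 𝕜 G] {g : E → G} {T : E ≃L[𝕜] G} {y₀ : E} {r : ℝ}
    {c : ℝ≥0} (hg : ApproximatesLinearOn g (T : E →L[𝕜] G) (closedBall y₀ r) c)
    (hc : (c : ℝ) < ‖(T.symm : G →L[𝕜] E)‖⁻¹) (hr : 0 ≤ r) {z : G}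
    (hz : ‖z - g y₀‖ ≤ (‖(T.symm : G →L[𝕜] E)‖⁻¹ - c) * r) :
    ∃! y, y ∈ closedBall y₀ r ∧ g y = z := by
  obtain ⟨y, hy, rfl⟩ := hg.surjOn_closedBall_of_nonlinearRightInverse
    T.toNonlinearRightInverse hr subset_rfl (mem_closedBall_iff_norm.2 hz)
  have hinj : InjOn g (closedBall y₀ r) :=
    hg.injOn (.inr (by rwa [← NNReal.coe_lt_coe, NNReal.coe_inv, coe_nnnorm]))
  exact ⟨y, ⟨hy, rfl⟩, fun y' ⟨hy', hgy'⟩ => hinj hy' hy hgy'⟩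

variable {E F G : Type*} [NormedAddCommGroup E] [NormedSpace ℝ E] [NormedAddCommGroup F]
  [NormedSpace ℝ F] [NormedAddCommGroup G] [NormedSpace ℝ G]

theorem Convex.approximatesLinearOn_of_norm_fderiv_sub_le {φ : E → G} {A : E →L[ℝ] G}
    {t : Set E} {c : ℝ≥0} (ht : Convex ℝ t) (hφ : ∀ z ∈ t, DifferentiableAt ℝ φ z)
    (hc : ∀ z ∈ t, ‖fderiv ℝ φ z - A‖ ≤ c) : ApproximatesLinearOn φ A t c :=
  fun _ ha _ hb => ht.norm_image_sub_le_of_norm_fderiv_le' hφ hc hb ha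

theorem norm_le_of_mem_closedBall_of_forall_mem_ball {H : Type*} [NormedAddCommGroup H]
    {φ : E → H} {c : E} {ρ C : ℝ} (hρ : ρ ≠ 0) (hφ : ContinuousOn φ (closedBall c ρ))
    (hC : ∀ z ∈ ball c ρ, ‖φ z‖ ≤ C) {z : E} (hz : z ∈ closedBall c ρ) : ‖φ z‖ ≤ C := by
  have hz' : z ∈ closure (ball c ρ) := by rwa [closure_ball c hρ]
  exact ((hφ z hz).mono ball_subset_closedBall).norm.closure_le hz' continuousWithinAt_const hC

theorem ContDiffOn.norm_sub_le_of_norm_fderiv_le {n : WithTop ℕ∞} {φ : E → G} {U t : Set E}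
    {C : ℝ} (hφ : ContDiffOn ℝ n φ U) (hn : n ≠ 0) (hU : IsOpen U) (ht : Convex ℝ t)
    (htU : t ⊆ U) (hC : ∀ z ∈ t, ‖fderiv ℝ φ z‖ ≤ C) {a b : E} (ha : a ∈ t) (hb : b ∈ t) :
    ‖φ a - φ b‖ ≤ C * ‖a - b‖ :=
  ht.norm_image_sub_le_of_norm_fderiv_le
    (fun _ hz => (hφ.differentiableOn hn).differentiableAt (hU.mem_nhds (htU hz))) hC hb ha

theorem ContDiffOn.norm_sub_le_of_norm_fderiv_fderiv_le {ψ : F → G} {V : Set F}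
    (hψ : ContDiffOn ℝ 2 ψ V) (hV : IsOpen V) {x₀ x : F} {K : ℝ}
    (hsub : closedBall x₀ ‖x - x₀‖ ⊆ V)
    (hK : ∀ z ∈ closedBall x₀ ‖x - x₀‖, ‖fderiv ℝ (fderiv ℝ ψ) z‖ ≤ K) :
    ‖ψ x - ψ x₀‖ ≤ (‖fderiv ℝ ψ x₀‖ + K * ‖x - x₀‖) * ‖x - x₀‖ := by
  have hx : x ∈ closedBall x₀ ‖x - x₀‖ := mem_closedBall_iff_norm.2 le_rfl
  have hx₀ : x₀ ∈ closedBall x₀ ‖x - x₀‖ := mem_closedBall_self (norm_nonneg _)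
  have hK₀ : 0 ≤ K := (hK x₀ hx₀).trans' (by positivity)
  have hDψ : ContDiffOn ℝ 1 (fderiv ℝ ψ) V := hψ.fderiv_of_isOpen hV le_rfl
  have hbound : ∀ z ∈ closedBall x₀ ‖x - x₀‖,
      ‖fderiv ℝ ψ z‖ ≤ ‖fderiv ℝ ψ x₀‖ + K * ‖x - x₀‖ := by
    intro z hz
    have hvar := hDψ.norm_sub_le_of_norm_fderiv_le one_ne_zero hV (convex_closedBall _ _) hsub hK
      hz hx₀
    calc ‖fderiv ℝ ψ z‖ ≤ ‖fderiv ℝ ψ x₀‖ + ‖fderiv ℝ ψ z - fderiv ℝ ψ x₀‖ := norm_le_insert' _ _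
      _ ≤ ‖fderiv ℝ ψ x₀‖ + K * ‖x - x₀‖ := by
        gcongr
        exact hvar.trans (mul_le_mul_of_nonneg_left (mem_closedBall_iff_norm.1 hz) hK₀)
  exact hψ.norm_sub_le_of_norm_fderiv_le two_ne_zero hV (convex_closedBall _ _) hsub hbound hx hx₀

section PartialDerivatives

variable {f : E × F → G} {s : Set (E × F)}

theorem ContDiffOn.comp_prodMk_const {n : WithTop ℕ∞} (hf : ContDiffOn ℝ n f s) (x : F) :
    ContDiffOn ℝ n (fun y => f (y, x)) {y | (y, x) ∈ s} :=
  hf.comp (contDiff_id.prodMk contDiff_const).contDiffOn fun _ hy => hy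

theorem ContDiffOn.comp_const_prodMk {n : WithTop ℕ∞} (hf : ContDiffOn ℝ n f s) (y : E) :
    ContDiffOn ℝ n (fun x => f (y, x)) {x | (y, x) ∈ s} :=
  hf.comp (contDiff_const.prodMk contDiff_id).contDiffOn fun _ hx => hx

theorem ContDiffOn.contDiffOn_fderiv_comp_prodMk_const {m n : WithTop ℕ∞} (hs : IsOpen s)
    (hf : ContDiffOn ℝ n f s) (hmn : m + 1 ≤ n) (y : E) :
    ContDiffOn ℝ m (fun x => fderiv ℝ (fun y' => f (y', x)) y) {x | (y, x) ∈ s} := by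
  have hDf : ContDiffOn ℝ m (fun x => (fderiv ℝ f (y, x)).comp (ContinuousLinearMap.inl ℝ E F))
      {x | (y, x) ∈ s} :=
    ((hf.fderiv_of_isOpen hs hmn).comp_const_prodMk y).clm_comp contDiffOn_const
  refine hDf.congr fun x hx => ?_
  have hfx : DifferentiableAt ℝ f (y, x) :=
    (hf.differentiableOn (ne_bot_of_le_ne_bot (by simp) hmn)).differentiableAt (hs.mem_nhds hx)
  exact (hfx.hasFDerivAt.comp y (hasFDerivAt_prodMk_left y x)).fderiv

theorem norm_fderiv_comp_prodMk_const_sub_le (hs : IsOpen s) (hf : ContDiffOn ℝ 2 f s)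
    {y₀ : E} {x₀ x : F} {r Kyy Kxy : ℝ} (hr : 0 < r)
    (hsub : closedBall y₀ r ×ˢ closedBall x₀ ‖x - x₀‖ ⊆ s)
    (hKyy : ∀ y ∈ ball y₀ r, ‖fderiv ℝ (fderiv ℝ fun y' => f (y', x₀)) y‖ ≤ Kyy)
    (hKxy : ∀ y ∈ closedBall y₀ r, ∀ z ∈ closedBall x₀ ‖x - x₀‖,
      ‖fderiv ℝ (fun x' => fderiv ℝ (fun y' => f (y', x')) y) z‖ ≤ Kxy)
    {y : E} (hy : y ∈ closedBall y₀ r) :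
    ‖fderiv ℝ (fun y' => f (y', x)) y - fderiv ℝ (fun y' => f (y', x₀)) y₀‖ ≤
      Kyy * r + Kxy * ‖x - x₀‖ := by
  have hx : x ∈ closedBall x₀ ‖x - x₀‖ := mem_closedBall_iff_norm.2 le_rfl
  have hx₀ : x₀ ∈ closedBall x₀ ‖x - x₀‖ := mem_closedBall_self (norm_nonneg _)
  have hy₀ : y₀ ∈ closedBall y₀ r := mem_closedBall_self hr.le
  have hKyy₀ : 0 ≤ Kyy := (hKyy y₀ (mem_ball_self hr)).trans' (by positivity)
  have hU : IsOpen {y' | (y', x₀) ∈ s} := hs.preimage (by fun_prop)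
  have hUsub : closedBall y₀ r ⊆ {y' | (y', x₀) ∈ s} := fun y' hy' => hsub ⟨hy', hx₀⟩
  have hDφ : ContDiffOn ℝ 1 (fderiv ℝ fun y' => f (y', x₀)) {y' | (y', x₀) ∈ s} :=
    (hf.comp_prodMk_const x₀).fderiv_of_isOpen hU le_rfl
  have hKyy' : ∀ y' ∈ closedBall y₀ r, ‖fderiv ℝ (fderiv ℝ fun y' => f (y', x₀)) y'‖ ≤ Kyy :=
    fun _ => norm_le_of_mem_closedBall_of_forall_mem_ball hr.ne'
      ((hDφ.continuousOn_fderiv_of_isOpen hU le_rfl).mono hUsub) hKyy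
  have hvar_y := hDφ.norm_sub_le_of_norm_fderiv_le one_ne_zero hU (convex_closedBall _ _) hUsub
    hKyy' hy hy₀
  have hvar_x := (hf.contDiffOn_fderiv_comp_prodMk_const hs le_rfl y).norm_sub_le_of_norm_fderiv_le
    one_ne_zero (hs.preimage (by fun_prop)) (convex_closedBall _ _) (fun z hz => hsub ⟨hy, hz⟩)
    (hKxy y hy) hx hx₀
  have hyr : Kyy * ‖y - y₀‖ ≤ Kyy * r :=
    mul_le_mul_of_nonneg_left (mem_closedBall_iff_norm.1 hy) hKyy₀
  calc _ ≤ ‖fderiv ℝ (fun y' => f (y', x)) y - fderiv ℝ (fun y' => f (y', x₀)) y‖ +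
        ‖fderiv ℝ (fun y' => f (y', x₀)) y - fderiv ℝ (fun y' => f (y', x₀)) y₀‖ :=
        norm_sub_le_norm_sub_add_norm_sub _ _ _
    _ ≤ Kyy * r + Kxy * ‖x - x₀‖ := by linarith

theorem existsUnique_mem_closedBall_apply_eq_of_norm_fderiv_le [CompleteSpace E]
    (hs : IsOpen s) (hf : ContDiffOn ℝ 2 f s) {y₀ : E} {x₀ x : F} {r : ℝ} (hr : 0 < r)
    (hsub : closedBall y₀ r ×ˢ closedBall x₀ ‖x - x₀‖ ⊆ s)
    (T : E ≃L[ℝ] G) (hT : (T : E →L[ℝ] G) = fderiv ℝ (fun y => f (y, x₀)) y₀)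
    {Kyy Kxx Kxy : ℝ}
    (hKyy : ∀ y ∈ ball y₀ r, ‖fderiv ℝ (fderiv ℝ fun y' => f (y', x₀)) y‖ ≤ Kyy)
    (hKxx : ∀ z ∈ closedBall x₀ ‖x - x₀‖, ‖fderiv ℝ (fderiv ℝ fun x' => f (y₀, x')) z‖ ≤ Kxx)
    (hKxy : ∀ y ∈ closedBall y₀ r, ∀ z ∈ closedBall x₀ ‖x - x₀‖,
      ‖fderiv ℝ (fun x' => fderiv ℝ (fun y' => f (y', x')) y) z‖ ≤ Kxy)
    (hcontr : Kyy * r + Kxy * ‖x - x₀‖ < ‖(T.symm : G →L[ℝ] E)‖⁻¹)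
    (hmaps : (‖fderiv ℝ (fun x' => f (y₀, x')) x₀‖ + Kxx * ‖x - x₀‖) * ‖x - x₀‖ +
      (Kyy * r + Kxy * ‖x - x₀‖) * r ≤ ‖(T.symm : G →L[ℝ] E)‖⁻¹ * r) :
    ∃! y, y ∈ closedBall y₀ r ∧ f (y, x) = f (y₀, x₀) := by
  have hx : x ∈ closedBall x₀ ‖x - x₀‖ := mem_closedBall_iff_norm.2 le_rfl
  have hy₀ : y₀ ∈ closedBall y₀ r := mem_closedBall_self hr.le
  have hslope : ∀ y ∈ closedBall y₀ r, ‖fderiv ℝ (fun y' => f (y', x)) y - T‖ ≤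
      Kyy * r + Kxy * ‖x - x₀‖ :=
    fun _ hy => hT ▸ norm_fderiv_comp_prodMk_const_sub_le hs hf hr hsub hKyy hKxy hy
  have hc : 0 ≤ Kyy * r + Kxy * ‖x - x₀‖ := (hslope y₀ hy₀).trans' (by positivity)
  have happrox : ApproximatesLinearOn (fun y => f (y, x)) (T : E →L[ℝ] G) (closedBall y₀ r)
      ⟨_, hc⟩ :=
    (convex_closedBall y₀ r).approximatesLinearOn_of_norm_fderiv_sub_le
      (fun y hy => ((hf.comp_prodMk_const x).differentiableOn two_ne_zero).differentiableAt
        ((hs.preimage (by fun_prop)).mem_nhds (hsub ⟨hy, hx⟩)))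
      hslope
  have hdisp : ‖f (y₀, x₀) - f (y₀, x)‖ ≤
      (‖fderiv ℝ (fun x' => f (y₀, x')) x₀‖ + Kxx * ‖x - x₀‖) * ‖x - x₀‖ := by
    rw [norm_sub_rev]
    exact (hf.comp_const_prodMk y₀).norm_sub_le_of_norm_fderiv_fderiv_le
      (hs.preimage (by fun_prop)) (fun z hz => hsub ⟨hy₀, hz⟩) hKxx
  refine happrox.existsUnique_mem_closedBall_eq hcontr hr.le (hdisp.trans ?_)
  change _ ≤ (_ - (Kyy * r + Kxy * ‖x - x₀‖)) * r
  linarith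
end PartialDerivatives

theorem contraction_bounds_of_smallness {My Lx Kyy Kxx Kxy r ε d : ℝ} (hMy : 0 ≤ My)
    (hLx : 0 ≤ Lx) (hKxx : 0 ≤ Kxx) (hd : 0 ≤ d) (hdε : d < ε) (hr : r ≤ 1 / (2 * My * Kyy))
    (hε : ε ≤ 1 / (4 * My * Kxy)) (hsmall : My * (Lx + Kxy * r + Kxx * ε) * ε < r / 2) :
    0 < r ∧ Kyy * r + Kxy * d < My⁻¹ ∧
      (Lx + Kxx * d) * d + (Kyy * r + Kxy * d) * r ≤ My⁻¹ * r := by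
  have hε₀ : 0 < ε := hd.trans_lt hdε
  -- `1 / 0 = 0`, so `0 < ε ≤ 1 / (4 * My * Kxy)` rules out `My * Kxy ≤ 0`.
  have hMyKxy : 0 < My * Kxy := by
    by_contra! h
    have : 1 / (4 * My * Kxy) ≤ 0 := one_div_nonpos.2 (by linarith)
    linarith
  have hMy₀ : 0 < My := lt_of_le_of_ne hMy (by rintro rfl; simp at hMyKxy)
  have hKxyε : My * Kxy * ε ≤ 1 / 4 := by
    rw [le_div_iff₀ (by linarith)] at hε
    linarith
  have hr₀ : 0 < r := by
    by_contra! h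
    nlinarith [mul_nonneg (mul_nonneg hMy hLx) hε₀.le,
      mul_nonneg (mul_nonneg hMy hKxx) (mul_nonneg hε₀.le hε₀.le)]
  have hKyyr : My * Kyy * r ≤ 1 / 2 := by
    rcases le_or_gt (My * Kyy) 0 with h | h
    · nlinarith
    · rw [le_div_iff₀ (by linarith)] at hr
      linarith
  refine ⟨hr₀, ?_, ?_⟩
  · rw [← mul_lt_mul_iff_right₀ hMy₀, mul_inv_cancel₀ hMy₀.ne']
    nlinarith
  · rw [← mul_le_mul_iff_right₀ hMy₀, ← mul_assoc, mul_inv_cancel₀ hMy₀.ne', one_mul]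
    nlinarith [mul_nonneg (mul_nonneg hMy hLx) (sub_nonneg.2 hdε.le),
      mul_nonneg (mul_nonneg hMy hKxx) (mul_nonneg (add_nonneg hd hε₀.le) (sub_nonneg.2 hdε.le)),
      mul_nonneg hMyKxy.le (mul_nonneg hr₀.le (sub_nonneg.2 hdε.le))]

theorem stmt6_general {n₁ n₂ : ℕ}
    (Y : Set (EuclideanSpace ℝ (Fin n₁))) (X : Set (EuclideanSpace ℝ (Fin n₂)))
    (hY : IsOpen Y) (hX : IsOpen X)
    (f : EuclideanSpace ℝ (Fin n₁) × EuclideanSpace ℝ (Fin n₂) → EuclideanSpace ℝ (Fin n₁))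
    (hf : ContDiffOn ℝ 2 f (Y ×ˢ X))
    (y₀ : EuclideanSpace ℝ (Fin n₁)) (x₀ : EuclideanSpace ℝ (Fin n₂))
    (T : EuclideanSpace ℝ (Fin n₁) ≃L[ℝ] EuclideanSpace ℝ (Fin n₁))
    (hT : (T : EuclideanSpace ℝ (Fin n₁) →L[ℝ] EuclideanSpace ℝ (Fin n₁)) =
      fderiv ℝ (fun y => f (y, x₀)) y₀)
    (R₁ R₂ : ℝ) (hR₂ : 0 < R₂)
    (hball₂ : ball (y₀, x₀) R₂ ⊆ Y ×ˢ X)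
    (Lx My Kyy Kxx Kxy P : ℝ)
    (hLx : Lx = ‖fderiv ℝ (fun x => f (y₀, x)) x₀‖)
    (hMy : My = ‖(T.symm : EuclideanSpace ℝ (Fin n₁) →L[ℝ] EuclideanSpace ℝ (Fin n₁))‖)
    (hKyy : Kyy = sSup ((fun y =>
        ‖fderiv ℝ (fun y' => fderiv ℝ (fun y'' => f (y'', x₀)) y') y‖) '' ball y₀ R₁))
    (hKyyB : BddAbove ((fun y =>
        ‖fderiv ℝ (fun y' => fderiv ℝ (fun y'' => f (y'', x₀)) y') y‖) '' ball y₀ R₁))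
    (hKxx : Kxx = sSup ((fun p : EuclideanSpace ℝ (Fin n₁) × EuclideanSpace ℝ (Fin n₂) =>
        ‖fderiv ℝ (fun x' => fderiv ℝ (fun x'' => f (p.1, x'')) x') p.2‖) '' ball (y₀, x₀) R₂))
    (hKxxB : BddAbove ((fun p : EuclideanSpace ℝ (Fin n₁) × EuclideanSpace ℝ (Fin n₂) =>
        ‖fderiv ℝ (fun x' => fderiv ℝ (fun x'' => f (p.1, x'')) x') p.2‖) '' ball (y₀, x₀) R₂))
    (hKxy : Kxy = sSup ((fun p : EuclideanSpace ℝ (Fin n₁) × EuclideanSpace ℝ (Fin n₂) =>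
        ‖fderiv ℝ (fun x' => fderiv ℝ (fun y' => f (y', x')) p.1) p.2‖) '' ball (y₀, x₀) R₂))
    (hKxyB : BddAbove ((fun p : EuclideanSpace ℝ (Fin n₁) × EuclideanSpace ℝ (Fin n₂) =>
        ‖fderiv ℝ (fun x' => fderiv ℝ (fun y' => f (y', x')) p.1) p.2‖) '' ball (y₀, x₀) R₂))
    (hP : P = min (1 / (2 * My * Kyy)) R₁) :
    ∀ r : ℝ, r ≤ min P R₂ →
      ∀ ε : ℝ, ε ≤ min (Real.sqrt (R₂ ^ 2 - r ^ 2)) (1 / (4 * My * Kxy)) →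
        My * (Lx + Kxy * r + Kxx * ε) * ε < r / 2 →
        ∀ x ∈ ball x₀ ε, ∃! y, y ∈ closedBall y₀ r ∧ f (y, x) = f (y₀, x₀) := by
  intro r hr ε hε hsmall x hx
  have hd : ‖x - x₀‖ < ε := mem_ball_iff_norm.1 hx
  have hKxx₀ : 0 ≤ Kxx :=
    (hKxx ▸ le_csSup hKxxB ⟨(y₀, x₀), mem_ball_self hR₂, rfl⟩).trans' (by positivity)
  have hrP : r ≤ P := hr.trans (min_le_left _ _)
  have hrR₁ : r ≤ R₁ := hrP.trans (hP ▸ min_le_right _ _)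
  obtain ⟨hr₀, hcontr, hmaps⟩ := contraction_bounds_of_smallness (hMy ▸ norm_nonneg _)
    (hLx ▸ norm_nonneg _) hKxx₀ (norm_nonneg _) hd (hrP.trans (hP ▸ min_le_left _ _))
    (hε.trans (min_le_right _ _)) hsmall
  have hsq : ‖x - x₀‖ ^ 2 < R₂ ^ 2 - r ^ 2 :=
    (Real.lt_sqrt (norm_nonneg _)).1 (hd.trans_le (hε.trans (min_le_left _ _)))
  have hball : closedBall y₀ r ×ˢ closedBall x₀ ‖x - x₀‖ ⊆ ball (y₀, x₀) R₂ := by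
    refine (prod_mono (closedBall_subset_closedBall (le_max_left _ _))
      (closedBall_subset_closedBall (le_max_right _ _))).trans
      ((closedBall_prod_same _ _ _).subset.trans (closedBall_subset_ball ?_))
    exact max_lt (by nlinarith) (by nlinarith [norm_nonneg (x - x₀)])
  subst hLx hMy
  exact existsUnique_mem_closedBall_apply_eq_of_norm_fderiv_le (hY.prod hX) hf hr₀
    (hball.trans hball₂) T hT
    (fun y hy => hKyy ▸ le_csSup hKyyB ⟨y, ball_subset_ball hrR₁ hy, rfl⟩)
    (fun z hz => hKxx ▸ le_csSup hKxxB ⟨(y₀, z), hball ⟨mem_closedBall_self hr₀.le, hz⟩, rfl⟩)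
    (fun y hy z hz => hKxy ▸ le_csSup hKxyB ⟨(y, z), hball ⟨hy, hz⟩, rfl⟩) hcontr hmaps

theorem stmt6 {n₁ n₂ : ℕ}
    (Y : Set (EuclideanSpace ℝ (Fin n₁))) (X : Set (EuclideanSpace ℝ (Fin n₂)))
    (hY : IsOpen Y) (hX : IsOpen X)
    (f : EuclideanSpace ℝ (Fin n₁) × EuclideanSpace ℝ (Fin n₂) → EuclideanSpace ℝ (Fin n₁))
    (hf : ContDiffOn ℝ 2 f (Y ×ˢ X))
    (y₀ : EuclideanSpace ℝ (Fin n₁)) (x₀ : EuclideanSpace ℝ (Fin n₂))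
    (hy₀ : y₀ ∈ Y) (hx₀ : x₀ ∈ X)
    (T : EuclideanSpace ℝ (Fin n₁) ≃L[ℝ] EuclideanSpace ℝ (Fin n₁))
    (hT : (T : EuclideanSpace ℝ (Fin n₁) →L[ℝ] EuclideanSpace ℝ (Fin n₁)) =
      fderiv ℝ (fun y => f (y, x₀)) y₀)
    (R₁ R₂ : ℝ) (hR₁ : 0 < R₁) (hR₂ : 0 < R₂)
    (hball₁ : ball y₀ R₁ ⊆ Y) (hball₂ : ball (y₀, x₀) R₂ ⊆ Y ×ˢ X)
    (Lx My Kyy Kxx Kxy P : ℝ)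
    (hLx : Lx = ‖fderiv ℝ (fun x => f (y₀, x)) x₀‖)
    (hMy : My = ‖(T.symm : EuclideanSpace ℝ (Fin n₁) →L[ℝ] EuclideanSpace ℝ (Fin n₁))‖)
    (hKyy : Kyy = sSup ((fun y =>
        ‖fderiv ℝ (fun y' => fderiv ℝ (fun y'' => f (y'', x₀)) y') y‖) '' ball y₀ R₁))
    (hKyyB : BddAbove ((fun y =>
        ‖fderiv ℝ (fun y' => fderiv ℝ (fun y'' => f (y'', x₀)) y') y‖) '' ball y₀ R₁))
    (hKxx : Kxx = sSup ((fun p : EuclideanSpace ℝ (Fin n₁) × EuclideanSpace ℝ (Fin n₂) =>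
        ‖fderiv ℝ (fun x' => fderiv ℝ (fun x'' => f (p.1, x'')) x') p.2‖) '' ball (y₀, x₀) R₂))
    (hKxxB : BddAbove ((fun p : EuclideanSpace ℝ (Fin n₁) × EuclideanSpace ℝ (Fin n₂) =>
        ‖fderiv ℝ (fun x' => fderiv ℝ (fun x'' => f (p.1, x'')) x') p.2‖) '' ball (y₀, x₀) R₂))
    (hKxy : Kxy = sSup ((fun p : EuclideanSpace ℝ (Fin n₁) × EuclideanSpace ℝ (Fin n₂) =>
        ‖fderiv ℝ (fun x' => fderiv ℝ (fun y' => f (y', x')) p.1) p.2‖) '' ball (y₀, x₀) R₂))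
    (hKxyB : BddAbove ((fun p : EuclideanSpace ℝ (Fin n₁) × EuclideanSpace ℝ (Fin n₂) =>
        ‖fderiv ℝ (fun x' => fderiv ℝ (fun y' => f (y', x')) p.1) p.2‖) '' ball (y₀, x₀) R₂))
    (hP : P = min (1 / (2 * My * Kyy)) R₁) :
    ∀ r : ℝ, r ≤ min P R₂ →
      ∀ ε : ℝ, ε ≤ min (Real.sqrt (R₂ ^ 2 - r ^ 2)) (1 / (4 * My * Kxy)) →
        My * (Lx + Kxy * r + Kxx * ε) * ε < r / 2 →
        ∀ x ∈ ball x₀ ε, ∃! y, y ∈ closedBall y₀ r ∧ f (y, x) = f (y₀, x₀) :=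
  stmt6_general Y X hY hX f hf y₀ x₀ T hT R₁ R₂ hR₂ hball₂ Lx My Kyy Kxx Kxy P hLx hMy hKyy hKyyB
    hKxx hKxxB hKxy hKxyB hP
end

section
/- For four equal masses m₁ = m₂ = m₃ = m₄ placed at positions q₁ = (0, y), q₂ = (-1, 0), q₃ = (0, -y), q₄ = (1, 0) with y > 0, the Dziobek–Laura–Andoyer equations f_ij = Σ_{k ≠ i,j} m_k (R_ik - R_jk) Δ_ijk = 0 for all 1 ≤ i < j ≤ 4 hold if and only if y = 1, i.e., the configuration is a square. -/
open Finset

/-- Euclidean distance between two points of the plane (given as pairs of reals). -/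
noncomputable def edist2 (p q : ℝ × ℝ) : ℝ :=
  Real.sqrt ((p.1 - q.1) ^ 2 + (p.2 - q.2) ^ 2)

/-- Planar cross product. -/
def cross2 (u v : ℝ × ℝ) : ℝ := u.1 * v.2 - u.2 * v.1

/-- The Dziobek–Laura–Andoyer function `f_ij` for masses `m` and positions `q`. -/
noncomputable def dziobek (m : Fin 4 → ℝ) (q : Fin 4 → ℝ × ℝ) (i j : Fin 4) : ℝ :=
  ∑ k ∈ Finset.univ.filter (fun k => k ≠ i ∧ k ≠ j),
    m k * (1 / edist2 (q i) (q k) ^ 3 - 1 / edist2 (q j) (q k) ^ 3) *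
      cross2 (q i - q k) (q j - q k)

/-!
For the rhombus with half-diagonals `x` and `y`, all four sides have the same length, so in each
`f_ij` the side terms cancel and only the diagonals `2x` and `2y` survive: `f_ij` vanishes
identically for the two diagonal pairs and equals `±(m x y / 4)(1 / y³ - 1 / x³)` for the four side
pairs. Hence the equations hold exactly when `x = y`, and the kite of the statement is the rhombus
with `x = 1`.
-/

lemma edist2_comm (p q : ℝ × ℝ) : edist2 p q = edist2 q p := by
  simp only [edist2]
  ring_nf

lemma edist2_eq_of_sq_eq {p q : ℝ × ℝ} {d : ℝ} (h : (p.1 - q.1) ^ 2 + (p.2 - q.2) ^ 2 = d ^ 2)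
    (hd : 0 ≤ d) : edist2 p q = d := by
  rw [edist2, h, Real.sqrt_sq hd]

lemma edist2_axes (a b : ℝ) : edist2 (a, 0) (0, b) = √(a ^ 2 + b ^ 2) := by
  simp only [edist2, sub_zero, zero_sub, neg_sq]

lemma edist2_axes' (a b : ℝ) : edist2 (0, b) (a, 0) = √(a ^ 2 + b ^ 2) := by
  rw [edist2_comm, edist2_axes]

lemma dziobek_eq_add {i j k l : Fin 4} (m : Fin 4 → ℝ) (q : Fin 4 → ℝ × ℝ)
    (hkl : k ≠ l) (h : univ.filter (fun n => n ≠ i ∧ n ≠ j) = {k, l}) :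
    dziobek m q i j =
      m k * (1 / edist2 (q i) (q k) ^ 3 - 1 / edist2 (q j) (q k) ^ 3) *
          cross2 (q i - q k) (q j - q k) +
        m l * (1 / edist2 (q i) (q l) ^ 3 - 1 / edist2 (q j) (q l) ^ 3) *
          cross2 (q i - q l) (q j - q l) := by
  rw [dziobek, h, sum_pair hkl]

def rhombus (x y : ℝ) : Fin 4 → ℝ × ℝ := ![(0, y), (-x, 0), (0, -y), (x, 0)]

section rhombus

variable {x y : ℝ}

@[simp] lemma rhombus_zero : rhombus x y 0 = (0, y) := rfl

@[simp] lemma rhombus_one : rhombus x y 1 = (-x, 0) := rfl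

@[simp] lemma rhombus_two : rhombus x y 2 = (0, -y) := rfl

@[simp] lemma rhombus_three : rhombus x y 3 = (x, 0) := rfl

lemma edist2_rhombus_zero_two (hy : 0 ≤ y) : edist2 (rhombus x y 0) (rhombus x y 2) = 2 * y :=
  edist2_eq_of_sq_eq (by simp; ring) (by positivity)

lemma edist2_rhombus_one_three (hx : 0 ≤ x) : edist2 (rhombus x y 1) (rhombus x y 3) = 2 * x :=
  edist2_eq_of_sq_eq (by simp; ring) (by positivity)

variable (m : ℝ)

lemma dziobek_rhombus_zero_one (hx : 0 < x) (hy : 0 < y) :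
    dziobek (fun _ => m) (rhombus x y) 0 1 = m * x * y / 4 * (1 / y ^ 3 - 1 / x ^ 3) := by
  rw [dziobek_eq_add _ _ (k := 2) (l := 3) (by decide) (by decide),
    edist2_rhombus_zero_two hy.le, edist2_rhombus_one_three hx.le]
  simp only [rhombus_zero, rhombus_one, rhombus_two, rhombus_three, edist2_axes, edist2_axes',
    neg_sq, cross2, Prod.mk_sub_mk]
  field_simp
  ring

lemma dziobek_rhombus_zero_two : dziobek (fun _ => m) (rhombus x y) 0 2 = 0 := by
  rw [dziobek_eq_add _ _ (k := 1) (l := 3) (by decide) (by decide)]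
  simp only [rhombus_zero, rhombus_one, rhombus_two, rhombus_three, edist2_axes', neg_sq, cross2,
    Prod.mk_sub_mk]
  ring

lemma dziobek_rhombus_zero_three (hx : 0 < x) (hy : 0 < y) :
    dziobek (fun _ => m) (rhombus x y) 0 3 = -(m * x * y / 4 * (1 / y ^ 3 - 1 / x ^ 3)) := by
  rw [dziobek_eq_add _ _ (k := 1) (l := 2) (by decide) (by decide),
    edist2_rhombus_zero_two hy.le, edist2_comm (rhombus x y 3) (rhombus x y 1),
    edist2_rhombus_one_three hx.le]
  simp only [rhombus_zero, rhombus_one, rhombus_two, rhombus_three, edist2_axes, edist2_axes',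
    neg_sq, cross2, Prod.mk_sub_mk]
  field_simp
  ring

lemma dziobek_rhombus_one_two (hx : 0 < x) (hy : 0 < y) :
    dziobek (fun _ => m) (rhombus x y) 1 2 = -(m * x * y / 4 * (1 / y ^ 3 - 1 / x ^ 3)) := by
  rw [dziobek_eq_add _ _ (k := 0) (l := 3) (by decide) (by decide),
    edist2_comm (rhombus x y 2) (rhombus x y 0), edist2_rhombus_zero_two hy.le,
    edist2_rhombus_one_three hx.le]
  simp only [rhombus_zero, rhombus_one, rhombus_two, rhombus_three, edist2_axes, edist2_axes',
    neg_sq, cross2, Prod.mk_sub_mk]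
  field_simp
  ring

lemma dziobek_rhombus_one_three : dziobek (fun _ => m) (rhombus x y) 1 3 = 0 := by
  rw [dziobek_eq_add _ _ (k := 0) (l := 2) (by decide) (by decide)]
  simp only [rhombus_zero, rhombus_one, rhombus_two, rhombus_three, edist2_axes, neg_sq, cross2,
    Prod.mk_sub_mk]
  ring

lemma dziobek_rhombus_two_three (hx : 0 < x) (hy : 0 < y) :
    dziobek (fun _ => m) (rhombus x y) 2 3 = m * x * y / 4 * (1 / y ^ 3 - 1 / x ^ 3) := by
  rw [dziobek_eq_add _ _ (k := 0) (l := 1) (by decide) (by decide),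
    edist2_comm (rhombus x y 2) (rhombus x y 0), edist2_rhombus_zero_two hy.le,
    edist2_comm (rhombus x y 3) (rhombus x y 1), edist2_rhombus_one_three hx.le]
  simp only [rhombus_zero, rhombus_one, rhombus_two, rhombus_three, edist2_axes, edist2_axes',
    neg_sq, cross2, Prod.mk_sub_mk]
  field_simp
  ring

lemma rhombus_defect_eq_zero_iff (hm : m ≠ 0) (hx : 0 < x) (hy : 0 < y) :
    m * x * y / 4 * (1 / y ^ 3 - 1 / x ^ 3) = 0 ↔ x = y := by
  have hc : m * x * y / 4 ≠ 0 := by positivity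
  rw [mul_eq_zero_iff_left hc, sub_eq_zero, one_div, one_div, inv_inj,
    pow_left_inj₀ hy.le hx.le three_ne_zero, eq_comm]

theorem dziobek_rhombus_eq_zero_iff (hm : m ≠ 0) (hx : 0 < x) (hy : 0 < y) :
    (∀ i j : Fin 4, i < j → dziobek (fun _ => m) (rhombus x y) i j = 0) ↔ x = y := by
  constructor
  · intro h
    rw [← rhombus_defect_eq_zero_iff m hm hx hy, ← dziobek_rhombus_zero_one m hx hy]
    exact h 0 1 (by decide)
  · rintro rfl i j hij
    fin_cases i <;> fin_cases j <;> revert hij <;>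
      simp [dziobek_rhombus_zero_one m hx hy, dziobek_rhombus_zero_two,
        dziobek_rhombus_zero_three m hx hy, dziobek_rhombus_one_two m hx hy,
        dziobek_rhombus_one_three, dziobek_rhombus_two_three m hx hy]

end rhombus

theorem stmt19 (m : ℝ) (hm : 0 < m) (y : ℝ) (hy : 0 < y) :
    (∀ i j : Fin 4, i < j →
        dziobek (fun _ => m) ![((0 : ℝ), y), (-1, 0), (0, -y), (1, 0)] i j = 0) ↔
      y = 1 :=
  (dziobek_rhombus_eq_zero_iff m hm.ne' one_pos hy).trans eq_comm
end
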